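/- A sequence a : ℕ → ℂ belongs to the β-dual of cs^λ, and equivalently to the β-dual of cs₀^λ (i.e. the series ∑_k a_k·x_k converges for every x in the respective space), if and only if both: (1) ∑_{k=0}^∞ |ã_k − ã_{k+1}| < ∞, and (2) sup_k |λ_k·a_k/(λ_k − λ_{k−1})| < ∞, where ã_k = (a_k/(λ_k − λ_{k−1}) − a_{k+1}/(λ_{k+1} − λ_k))·λ_k. -/

import Mathlib

open Filter Topology

/-- `dl l k = λ_k - λ_{k-1}` with the convention `λ_{-1} = 0`. -/
noncomputable def dl (l : ℕ → ℝ) (k : ℕ) : ℝ := l k - (if k = 0 then 0 else l (k - 1))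

/-- `LamT l x n = Λ_n(x) = (1/λ_n) ∑_{k=0}^n (λ_k - λ_{k-1}) x_k`. -/
noncomputable def LamT (l : ℕ → ℝ) (x : ℕ → ℂ) (n : ℕ) : ℂ :=
  (1 / (l n : ℂ)) * ∑ k ∈ Finset.range (n + 1), ((dl l k : ℝ) : ℂ) * x k

/-- `cs^λ`: the partial sums `∑_{n=0}^m Λ_n(x)` converge. -/
def csLam (l : ℕ → ℝ) : Set (ℕ → ℂ) :=
  {x | ∃ L, Tendsto (fun m => ∑ n ∈ Finset.range (m + 1), LamT l x n) atTop (𝓝 L)}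

/-- `cs₀^λ`: the partial sums `∑_{n=0}^m Λ_n(x)` tend to `0`. -/
def cs0Lam (l : ℕ → ℝ) : Set (ℕ → ℂ) :=
  {x | Tendsto (fun m => ∑ n ∈ Finset.range (m + 1), LamT l x n) atTop (𝓝 0)}

/-- `bs^λ`: the partial sums `∑_{n=0}^m Λ_n(x)` are bounded. -/
def bsLam (l : ℕ → ℝ) : Set (ℕ → ℂ) :=
  {x | ∃ C, ∀ m, ‖∑ n ∈ Finset.range (m + 1), LamT l x n‖ ≤ C}

/-- `ã_k = (a_k/(λ_k - λ_{k-1}) - a_{k+1}/(λ_{k+1} - λ_k)) λ_k`. -/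
noncomputable def atil (l : ℕ → ℝ) (a : ℕ → ℂ) (k : ℕ) : ℂ :=
  (a k / ((dl l k : ℝ) : ℂ) - a (k + 1) / ((dl l (k + 1) : ℝ) : ℂ)) * (l k : ℂ)

/-!
Write `t = Λ(x)`, `S_m = ∑_{n ≤ m} t_n` and `b_k = λ_k a_k / (λ_k - λ_{k-1})` (`ahat`).
Two summations by parts give
`∑_{k ≤ N+1} a_k x_k = ∑_{k < N} (ã_k - ã_{k+1}) S_k + ã_N S_N + b_{N+1} t_{N+1}`,
and every sequence `S` is the sequence of partial sums of `Λ(x)` for some `x`.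

If `S` converges, it is bounded, `ã` converges because its differences are summable, and
`t → 0`; so the right-hand side converges when `b` is bounded.

Conversely, suppose `∑ a_k x_k` converges for every `x ∈ cs₀^λ`. If `b` were unbounded, a null
sequence `S` supported on a sparse set on which `|b|` is large would give `a_k x_k = b_k S_k = 1`
infinitely often. Once `b` is bounded, the boundary terms vanish for every null sequence `S`,
so `∑ (ã_k - ã_{k+1}) S_k` converges for all `S → 0`, which forces absolute summability by the
Abel–Dini theorem.
-/

open Finset

section BackwardDifference

variable {M : Type*} [AddCommGroup M]

def bdiff (y : ℕ → M) (k : ℕ) : M := y k - if k = 0 then 0 else y (k - 1)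

@[simp] lemma bdiff_zero (y : ℕ → M) : bdiff y 0 = y 0 := by simp [bdiff]

@[simp] lemma bdiff_succ (y : ℕ → M) (k : ℕ) : bdiff y (k + 1) = y (k + 1) - y k := by
  simp [bdiff]

lemma sum_range_succ_bdiff (y : ℕ → M) (n : ℕ) : ∑ k ∈ range (n + 1), bdiff y k = y n := by
  induction n with
  | zero => simp
  | succ n ih => rw [sum_range_succ, ih, bdiff_succ, add_sub_cancel]

lemma bdiff_sum_range_succ (v : ℕ → M) : bdiff (fun n => ∑ k ∈ range (n + 1), v k) = v := by
  ext k
  cases k with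
  | zero => simp
  | succ k => simp [sum_range_succ]

lemma sum_range_succ_mul_bdiff {R : Type*} [CommRing R] (u V : ℕ → R) (N : ℕ) :
    ∑ k ∈ range (N + 1), u k * bdiff V k
      = ∑ k ∈ range N, (u k - u (k + 1)) * V k + u N * V N := by
  induction N with
  | zero => simp
  | succ N ih =>
    rw [sum_range_succ, ih, sum_range_succ, bdiff_succ]
    ring

end BackwardDifference

lemma tendsto_zero_of_tendsto_sum_range_succ {G : Type*} [AddCommGroup G] [TopologicalSpace G]
    [IsTopologicalAddGroup G] {f : ℕ → G} {L : G}
    (h : Tendsto (fun m => ∑ k ∈ range (m + 1), f k) atTop (𝓝 L)) :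
    Tendsto f atTop (𝓝 0) := by
  rw [← tendsto_add_atTop_iff_nat 1]
  have := ((tendsto_add_atTop_iff_nat 1).mpr h).sub h
  simpa [sum_range_succ _ (_ + 1)] using this

lemma Function.Injective.tendsto_extend_zero {α β γ : Type*} [Zero γ] [TopologicalSpace γ]
    {m : α → β} (hm : m.Injective) {g : α → γ} (hg : Tendsto g cofinite (𝓝 0)) :
    Tendsto (Function.extend m g 0) cofinite (𝓝 0) := by
  intro U hU
  refine mem_cofinite.mpr (((mem_cofinite.mp (hg hU)).image m).subset fun n hn => ?_)
  by_cases h : ∃ j, m j = n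
  · obtain ⟨j, rfl⟩ := h
    exact ⟨j, by simpa [hm.extend_apply] using hn, rfl⟩
  · simp [Function.extend_apply' _ _ _ h, mem_of_mem_nhds hU] at hn

lemma exists_subseq_gap_three_lt {f : ℕ → ℝ} (hf : ¬BddAbove (Set.range f)) :
    ∃ m : ℕ → ℕ, (∀ i j, i < j → m i + 3 ≤ m j) ∧ (∀ j, 2 ≤ m j) ∧
      ∀ j : ℕ, (j : ℝ) + 1 < f (m j) := by
  have hfreq : ∀ n : ℕ, ∃ᶠ k in atTop, (n : ℝ) + 1 < f k := by
    intro n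
    by_contra h
    rw [not_frequently] at h
    exact hf (isBoundedUnder_of_eventually_le (h.mono fun k hk => not_lt.mp hk)).bddAbove_range
  obtain ⟨φ, hφ, hφf⟩ := extraction_forall_of_frequently hfreq
  refine ⟨fun j => φ (3 * j + 2), fun i j hij => ?_, fun j => ?_, fun j => ?_⟩
  · show φ (3 * i + 2) + 3 ≤ φ (3 * j + 2)
    have := hφ.add_le_nat 3 (3 * i + 2)
    have := hφ.monotone (show 3 + (3 * i + 2) ≤ 3 * j + 2 by omega)
    omega
  · exact (show 2 ≤ 3 * j + 2 by omega).trans (hφ.id_le _)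
  · refine lt_of_le_of_lt ?_ (hφf (3 * j + 2))
    push_cast
    linarith [(j.cast_nonneg : (0 : ℝ) ≤ j)]

lemma not_summable_div_sum_range {u : ℕ → ℝ} (hu : ∀ k, 0 ≤ u k) (hns : ¬Summable u) :
    ¬Summable fun k => u k / ∑ j ∈ range (k + 1), u j := by
  set T : ℕ → ℝ := fun N => ∑ j ∈ range N, u j
  have hT : Tendsto T atTop atTop := (not_summable_iff_tendsto_nat_atTop_of_nonneg hu).mp hns
  have hTmono : Monotone T := fun N M h => sum_le_sum_of_subset_of_nonneg
    (range_subset_range.mpr h) fun k _ _ => hu k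
  intro hQ
  set Q : ℕ → ℝ := fun N => ∑ k ∈ range N, u k / T (k + 1)
  have hQlim : Tendsto Q atTop (𝓝 (∑' k, u k / T (k + 1))) := hQ.hasSum.tendsto_sum_nat
  have hgap : ∀ N M, N ≤ M → 0 < T N → 1 - T N / T M ≤ Q M - Q N := by
    intro N M hNM hN
    have hM : 0 < T M := hN.trans_le (hTmono hNM)
    calc 1 - T N / T M = (T M - T N) / T M := by field_simp
      _ = ∑ k ∈ Ico N M, u k / T M := by rw [← sum_div, sum_Ico_eq_sub _ hNM]
      _ ≤ ∑ k ∈ Ico N M, u k / T (k + 1) := sum_le_sum fun k hk => by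
          have hk := mem_Ico.mp hk
          exact div_le_div_of_nonneg_left (hu k) (hN.trans_le (hTmono (by omega)))
            (hTmono (by omega))
      _ = Q M - Q N := (sum_Ico_eq_sub _ hNM)
  have htail : ∀ᶠ N in atTop, 1 ≤ (∑' k, u k / T (k + 1)) - Q N := by
    filter_upwards [hT.eventually_gt_atTop 0] with N hN
    refine le_of_tendsto_of_tendsto (f := fun M => 1 - T N / T M) ?_
      (hQlim.sub tendsto_const_nhds) ?_
    · simpa using tendsto_const_nhds.sub (tendsto_const_nhds.div_atTop hT)
    · filter_upwards [eventually_ge_atTop N] with M hM using hgap N M hM hN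
  exact absurd (ge_of_tendsto (tendsto_const_nhds.sub hQlim) htail) (by norm_num)

theorem summable_norm_of_forall_tendsto_sum_mul {𝕜 : Type*} [RCLike 𝕜] {c : ℕ → 𝕜}
    (h : ∀ S : ℕ → 𝕜, Tendsto S atTop (𝓝 0) →
      ∃ L, Tendsto (fun N => ∑ k ∈ range N, c k * S k) atTop (𝓝 L)) :
    Summable fun k => ‖c k‖ := by
  by_contra hns
  set T : ℕ → ℝ := fun N => ∑ j ∈ range N, ‖c j‖
  have hT : Tendsto T atTop atTop :=
    (not_summable_iff_tendsto_nat_atTop_of_nonneg fun k => norm_nonneg _).mp hns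
  have hT0 : ∀ k, 0 ≤ T k := fun k => sum_nonneg fun j _ => norm_nonneg _
  -- `S → 0`, but `∑ c_k S_k = ∑ ‖c_k‖ / T_{k+1}` diverges by the Abel–Dini theorem.
  set S : ℕ → 𝕜 := fun k => starRingEnd 𝕜 (c k) / ((‖c k‖ * T (k + 1) : ℝ) : 𝕜)
  have hcS : ∀ k, c k * S k = ((‖c k‖ / T (k + 1) : ℝ) : 𝕜) := by
    intro k
    by_cases hc : c k = 0
    · simp [S, hc]
    rw [← mul_div_assoc, RCLike.mul_conj, ← RCLike.ofReal_pow, ← RCLike.ofReal_div, sq,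
      mul_div_mul_left _ _ (norm_ne_zero_iff.mpr hc)]
  have hS : Tendsto S atTop (𝓝 0) := by
    refine squeeze_zero_norm (fun k => ?_) (hT.comp (tendsto_add_atTop_nat 1)).inv_tendsto_atTop
    rw [norm_div, RCLike.norm_conj, RCLike.norm_ofReal, abs_of_nonneg (by positivity [hT0 (k + 1)]),
      div_mul_eq_div_div, ← one_div]
    exact div_le_div_of_nonneg_right (div_self_le_one _) (hT0 _)
  obtain ⟨L, hL⟩ := h S hS
  refine not_summable_div_sum_range (fun k => norm_nonneg (c k)) hns
    ((summable_iff_not_tendsto_nat_atTop_of_nonneg fun k => by positivity [hT0 (k + 1)]).mpr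
      (not_tendsto_atTop_of_tendsto_nhds (a := RCLike.re L) ?_))
  refine ((RCLike.continuous_re.tendsto L).comp hL).congr fun N => ?_
  simp only [Function.comp_apply, hcS, ← RCLike.ofReal_sum, RCLike.ofReal_re, T]

section Lambda

variable {l : ℕ → ℝ}

lemma l_pos (hmono : StrictMono l) (hpos : 0 < l 0) (k : ℕ) : 0 < l k :=
  hpos.trans_le (hmono.monotone k.zero_le)

lemma dl_pos (hmono : StrictMono l) (hpos : 0 < l 0) (k : ℕ) : 0 < dl l k := by
  cases k with
  | zero => simpa [dl] using hpos
  | succ k => simpa [dl] using hmono k.lt_succ_self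

noncomputable def ahat (l : ℕ → ℝ) (a : ℕ → ℂ) (k : ℕ) : ℂ :=
  (l k : ℂ) * a k / ((dl l k : ℝ) : ℂ)

noncomputable def lamSum (l : ℕ → ℝ) (x : ℕ → ℂ) (m : ℕ) : ℂ :=
  ∑ n ∈ range (m + 1), LamT l x n

lemma LamT_eq_bdiff_lamSum (l : ℕ → ℝ) (x : ℕ → ℂ) : LamT l x = bdiff (lamSum l x) :=
  (bdiff_sum_range_succ _).symm

lemma mul_LamT (hl : ∀ k, l k ≠ 0) (x : ℕ → ℂ) (n : ℕ) :
    (l n : ℂ) * LamT l x n = ∑ k ∈ range (n + 1), ((dl l k : ℝ) : ℂ) * x k := by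
  rw [LamT, ← mul_assoc, mul_one_div_cancel (Complex.ofReal_ne_zero.mpr (hl n)), one_mul]

lemma sum_range_succ_mul_eq_atil (hl : ∀ k, l k ≠ 0) (hdl : ∀ k, dl l k ≠ 0)
    (a x : ℕ → ℂ) (N : ℕ) :
    ∑ k ∈ range (N + 1), a k * x k
      = ∑ k ∈ range N, atil l a k * LamT l x k + ahat l a N * LamT l x N := by
  have hax : ∀ k, a k * x k
      = a k / ((dl l k : ℝ) : ℂ) * bdiff (fun n => (l n : ℂ) * LamT l x n) k := by
    intro k
    simp only [mul_LamT hl, bdiff_sum_range_succ (fun k => ((dl l k : ℝ) : ℂ) * x k)]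
    field_simp [Complex.ofReal_ne_zero.mpr (hdl k)]
  rw [sum_congr rfl fun k _ => hax k, sum_range_succ_mul_bdiff]
  simp only [atil, ahat]
  ring_nf

lemma sum_range_mul_eq_abel (hl : ∀ k, l k ≠ 0) (hdl : ∀ k, dl l k ≠ 0)
    (a x : ℕ → ℂ) (N : ℕ) :
    ∑ k ∈ range (N + 2), a k * x k
      = ∑ k ∈ range N, (atil l a k - atil l a (k + 1)) * lamSum l x k
        + atil l a N * lamSum l x N + ahat l a (N + 1) * LamT l x (N + 1) := by
  rw [sum_range_succ_mul_eq_atil hl hdl, LamT_eq_bdiff_lamSum, sum_range_succ_mul_bdiff]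

/-- The sequence `x` with `∑_{n ≤ m} Λ_n(x) = S_m` for all `m`. -/
noncomputable def ofLamSums (l : ℕ → ℝ) (S : ℕ → ℂ) (k : ℕ) : ℂ :=
  bdiff (fun n => (l n : ℂ) * bdiff S n) k / ((dl l k : ℝ) : ℂ)

lemma LamT_ofLamSums (hl : ∀ k, l k ≠ 0) (hdl : ∀ k, dl l k ≠ 0) (S : ℕ → ℂ) :
    LamT l (ofLamSums l S) = bdiff S := by
  ext n
  have h := mul_LamT hl (ofLamSums l S) n
  simp only [ofLamSums, mul_div_cancel₀ _ (Complex.ofReal_ne_zero.mpr (hdl _)),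
    sum_range_succ_bdiff] at h
  exact mul_left_cancel₀ (Complex.ofReal_ne_zero.mpr (hl n)) h

lemma lamSum_ofLamSums (hl : ∀ k, l k ≠ 0) (hdl : ∀ k, dl l k ≠ 0) (S : ℕ → ℂ) :
    lamSum l (ofLamSums l S) = S := by
  ext m
  simp only [lamSum, LamT_ofLamSums hl hdl, sum_range_succ_bdiff]

lemma ofLamSums_mem_cs0Lam (hl : ∀ k, l k ≠ 0) (hdl : ∀ k, dl l k ≠ 0) {S : ℕ → ℂ}
    (hS : Tendsto S atTop (𝓝 0)) : ofLamSums l S ∈ cs0Lam l := by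
  show Tendsto (lamSum l (ofLamSums l S)) atTop (𝓝 0)
  rwa [lamSum_ofLamSums hl hdl]

lemma mul_ofLamSums_of_eq_zero (a S : ℕ → ℂ) {k : ℕ} (h₀ : S k = 0) (h₁ : S (k + 1) = 0) :
    a (k + 2) * ofLamSums l S (k + 2) = ahat l a (k + 2) * S (k + 2) := by
  simp only [ofLamSums, ahat, bdiff_succ, h₀, h₁]
  ring

end Lambda

section Duality

variable {l : ℕ → ℝ}

lemma norm_atil_le (hmono : StrictMono l) (hpos : 0 < l 0) (a : ℕ → ℂ) (k : ℕ) :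
    ‖atil l a k‖ ≤ ‖ahat l a k‖ + ‖ahat l a (k + 1)‖ := by
  have hl := l_pos hmono hpos
  set ρ : ℝ := l k / l (k + 1)
  have hρ : ‖(ρ : ℂ)‖ ≤ 1 := by
    rw [Complex.norm_real, Real.norm_of_nonneg (div_pos (hl k) (hl _)).le]
    exact div_le_one_of_le₀ (hmono k.lt_succ_self).le (hl _).le
  have hdl k : ((dl l k : ℝ) : ℂ) ≠ 0 := Complex.ofReal_ne_zero.mpr (dl_pos hmono hpos k).ne'
  have hatil : atil l a k = ahat l a k - ρ * ahat l a (k + 1) := by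
    have := Complex.ofReal_ne_zero.mpr (hl (k + 1)).ne'
    simp only [atil, ahat, ρ, Complex.ofReal_div]
    field_simp [hdl k, hdl (k + 1)]
  calc ‖atil l a k‖ ≤ ‖ahat l a k‖ + ‖(ρ : ℂ)‖ * ‖ahat l a (k + 1)‖ := by
        rw [hatil, ← norm_mul]; exact norm_sub_le _ _
    _ ≤ ‖ahat l a k‖ + ‖ahat l a (k + 1)‖ := by
        gcongr; exact mul_le_of_le_one_left (norm_nonneg _) hρ

theorem exists_tendsto_sum_mul_of_mem_csLam (hl : ∀ k, l k ≠ 0) (hdl : ∀ k, dl l k ≠ 0)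
    {a : ℕ → ℂ} (hsum : Summable fun k => ‖atil l a k - atil l a (k + 1)‖)
    (hb : ∃ C : ℝ, ∀ k, ‖ahat l a k‖ ≤ C) {x : ℕ → ℂ} (hx : x ∈ csLam l) :
    ∃ L, Tendsto (fun m => ∑ k ∈ range (m + 1), a k * x k) atTop (𝓝 L) := by
  obtain ⟨L, hS⟩ : ∃ L, Tendsto (lamSum l x) atTop (𝓝 L) := hx
  obtain ⟨C, hC⟩ := hb
  obtain ⟨M, hM⟩ : BddAbove (Set.range fun k => ‖lamSum l x k‖) := hS.norm.bddAbove_range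
  have hmain : Summable fun k => (atil l a k - atil l a (k + 1)) * lamSum l x k :=
    Summable.of_norm_bounded (hsum.mul_right M) fun k => by
      rw [norm_mul]; gcongr; exact hM ⟨k, rfl⟩
  obtain ⟨A, hA⟩ : ∃ A, Tendsto (atil l a) atTop (𝓝 A) :=
    cauchySeq_tendsto_of_complete (cauchySeq_of_summable_dist (by simpa [dist_eq_norm] using hsum))
  have hLamT : Tendsto (fun N => LamT l x (N + 1)) atTop (𝓝 0) :=
    (tendsto_add_atTop_iff_nat 1).mpr
      (tendsto_zero_of_tendsto_sum_range_succ (f := LamT l x) hS)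
  have hlast : Tendsto (fun N => ahat l a (N + 1) * LamT l x (N + 1)) atTop (𝓝 0) :=
    isBoundedUnder_le_mul_tendsto_zero (isBoundedUnder_of ⟨C, fun N => hC (N + 1)⟩) hLamT
  have hlim := (hmain.hasSum.tendsto_sum_nat.add (hA.mul hS)).add hlast
  exact ⟨_, (tendsto_add_atTop_iff_nat 1).mp
    (hlim.congr fun N => (sum_range_mul_eq_abel hl hdl a x N).symm)⟩

theorem bounded_ahat_of_forall_mem_cs0Lam (hl : ∀ k, l k ≠ 0) (hdl : ∀ k, dl l k ≠ 0)
    {a : ℕ → ℂ} (H : ∀ x ∈ cs0Lam l,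
      ∃ L, Tendsto (fun m => ∑ k ∈ range (m + 1), a k * x k) atTop (𝓝 L)) :
    ∃ C : ℝ, ∀ k, ‖ahat l a k‖ ≤ C := by
  by_contra hb
  obtain ⟨m, hgap, hm2, hbig⟩ := exists_subseq_gap_three_lt (f := fun k => ‖ahat l a k‖)
    fun ⟨C, hC⟩ => hb ⟨C, fun k => hC ⟨k, rfl⟩⟩
  have hmono : StrictMono m := fun i j hij => by have := hgap i j hij; omega
  have hne j : ahat l a (m j) ≠ 0 :=
    norm_pos_iff.mp ((by positivity : (0 : ℝ) < j + 1).trans (hbig j))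
  -- The gaps in `range m` make `a_k x_k = ahat_k S_k = 1` on `range m`, although `S → 0`.
  set S : ℕ → ℂ := Function.extend m (fun j => (ahat l a (m j))⁻¹) 0
  have hS : Tendsto S atTop (𝓝 0) := by
    rw [← Nat.cofinite_eq_atTop]
    refine hmono.injective.tendsto_extend_zero ?_
    rw [Nat.cofinite_eq_atTop]
    refine squeeze_zero_norm (fun j => ?_) tendsto_one_div_add_atTop_nhds_zero_nat
    rw [norm_inv, one_div]
    exact inv_anti₀ (by positivity) (hbig j).le
  have hS_off : ∀ n, (∀ j, m j ≠ n) → S n = 0 := fun n hn =>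
    by simp [S, Function.extend_apply' _ _ _ (not_exists.mpr hn)]
  have hone : ∀ j, a (m j) * ofLamSums l S (m j) = 1 := by
    intro j
    obtain ⟨p, hp⟩ : ∃ p, m j = p + 2 := ⟨m j - 2, by have := hm2 j; omega⟩
    have hoff : ∀ i, m i ≠ p ∧ m i ≠ p + 1 := fun i => by
      rcases lt_trichotomy i j with h | rfl | h
      · have := hgap i j h; omega
      · omega
      · have := hmono h; omega
    rw [hp, mul_ofLamSums_of_eq_zero a S (hS_off p fun i => (hoff i).1)
      (hS_off (p + 1) fun i => (hoff i).2), ← hp]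
    simp only [S, hmono.injective.extend_apply]
    exact mul_inv_cancel₀ (hne j)
  obtain ⟨L, hL⟩ := H _ (ofLamSums_mem_cs0Lam hl hdl hS)
  have hterm := (tendsto_zero_of_tendsto_sum_range_succ hL).comp hmono.tendsto_atTop
  exact zero_ne_one (tendsto_nhds_unique (Tendsto.congr hone hterm) tendsto_const_nhds)

theorem summable_of_forall_mem_cs0Lam (hmono : StrictMono l) (hpos : 0 < l 0)
    {a : ℕ → ℂ} (H : ∀ x ∈ cs0Lam l,
      ∃ L, Tendsto (fun m => ∑ k ∈ range (m + 1), a k * x k) atTop (𝓝 L))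
    (hb : ∃ C : ℝ, ∀ k, ‖ahat l a k‖ ≤ C) :
    Summable fun k => ‖atil l a k - atil l a (k + 1)‖ := by
  have hl k : l k ≠ 0 := (l_pos hmono hpos k).ne'
  have hdl k : dl l k ≠ 0 := (dl_pos hmono hpos k).ne'
  obtain ⟨C, hC⟩ := hb
  refine summable_norm_of_forall_tendsto_sum_mul fun S hS => ?_
  obtain ⟨L, hL⟩ := H _ (ofLamSums_mem_cs0Lam hl hdl hS)
  have hatil : Tendsto (fun N => atil l a N * S N) atTop (𝓝 0) :=
    isBoundedUnder_le_mul_tendsto_zero (isBoundedUnder_of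
      ⟨C + C, fun N => (norm_atil_le hmono hpos a N).trans (add_le_add (hC N) (hC (N + 1)))⟩) hS
  have hdS : Tendsto (fun N => bdiff S (N + 1)) atTop (𝓝 0) := by
    simpa using ((tendsto_add_atTop_iff_nat 1).mpr hS).sub hS
  have hlast : Tendsto (fun N => ahat l a (N + 1) * bdiff S (N + 1)) atTop (𝓝 0) :=
    isBoundedUnder_le_mul_tendsto_zero (isBoundedUnder_of ⟨C, fun N => hC (N + 1)⟩) hdS
  refine ⟨L - 0 - 0, ((((tendsto_add_atTop_iff_nat 1).mpr hL).sub hatil).sub hlast).congr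
    fun N => ?_⟩
  rw [show N + 1 + 1 = N + 2 from rfl, sum_range_mul_eq_abel hl hdl, lamSum_ofLamSums hl hdl,
    LamT_ofLamSums hl hdl]
  ring

end Duality

theorem stmt15_general (l : ℕ → ℝ) (hmono : StrictMono l) (hpos : 0 < l 0)
    (a : ℕ → ℂ) :
    ((∀ x ∈ csLam l,
        ∃ L, Tendsto (fun m => ∑ k ∈ Finset.range (m + 1), a k * x k) atTop (𝓝 L)) ↔
      ((Summable fun k => ‖atil l a k - atil l a (k + 1)‖) ∧
        ∃ C : ℝ, ∀ k, ‖(l k : ℂ) * a k / ((dl l k : ℝ) : ℂ)‖ ≤ C)) ∧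
    ((∀ x ∈ cs0Lam l,
        ∃ L, Tendsto (fun m => ∑ k ∈ Finset.range (m + 1), a k * x k) atTop (𝓝 L)) ↔
      ((Summable fun k => ‖atil l a k - atil l a (k + 1)‖) ∧
        ∃ C : ℝ, ∀ k, ‖(l k : ℂ) * a k / ((dl l k : ℝ) : ℂ)‖ ≤ C)) := by
  have hl k : l k ≠ 0 := (l_pos hmono hpos k).ne'
  have hdl k : dl l k ≠ 0 := (dl_pos hmono hpos k).ne'
  have hsub : cs0Lam l ⊆ csLam l := fun x hx => ⟨0, hx⟩
  have necessary (H : ∀ x ∈ cs0Lam l,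
      ∃ L, Tendsto (fun m => ∑ k ∈ range (m + 1), a k * x k) atTop (𝓝 L)) :
      (Summable fun k => ‖atil l a k - atil l a (k + 1)‖) ∧ ∃ C : ℝ, ∀ k, ‖ahat l a k‖ ≤ C :=
    have hb := bounded_ahat_of_forall_mem_cs0Lam hl hdl H
    ⟨summable_of_forall_mem_cs0Lam hmono hpos H hb, hb⟩
  have sufficient := fun (h : (Summable fun k => ‖atil l a k - atil l a (k + 1)‖) ∧
      ∃ C : ℝ, ∀ k, ‖ahat l a k‖ ≤ C) x (hx : x ∈ csLam l) =>
    exists_tendsto_sum_mul_of_mem_csLam hl hdl h.1 h.2 hx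
  exact ⟨⟨fun H => necessary fun x hx => H x (hsub hx), sufficient⟩,
    ⟨necessary, fun h x hx => sufficient h x (hsub hx)⟩⟩

theorem stmt15 (l : ℕ → ℝ) (hmono : StrictMono l) (hpos : 0 < l 0)
    (hlim : Tendsto l atTop atTop) (a : ℕ → ℂ) :
    ((∀ x ∈ csLam l,
        ∃ L, Tendsto (fun m => ∑ k ∈ Finset.range (m + 1), a k * x k) atTop (𝓝 L)) ↔
      ((Summable fun k => ‖atil l a k - atil l a (k + 1)‖) ∧
        ∃ C : ℝ, ∀ k, ‖(l k : ℂ) * a k / ((dl l k : ℝ) : ℂ)‖ ≤ C)) ∧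
    ((∀ x ∈ cs0Lam l,
        ∃ L, Tendsto (fun m => ∑ k ∈ Finset.range (m + 1), a k * x k) atTop (𝓝 L)) ↔
      ((Summable fun k => ‖atil l a k - atil l a (k + 1)‖) ∧
        ∃ C : ℝ, ∀ k, ‖(l k : ℂ) * a k / ((dl l k : ℝ) : ℂ)‖ ≤ C)) :=
  stmt15_general l hmono hpos a
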